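/- If X is a real-valued random variable with E[X] = 0 and |X| ≤ M almost surely for some M > 0, then for every 0 ≤ λ ≤ 1/M, E[exp(λX)] ≤ exp((3/4)λ² E[X²]). -/
import Mathlib

open MeasureTheory

lemma exp_le_one_add_add {x : ℝ} (hx : |x| ≤ 1) :
    Real.exp x ≤ 1 + x + (3 / 4) * x ^ 2 := by
  have h := Real.exp_bound hx (n := 5) (by norm_num)
  have hsum : ∑ m ∈ Finset.range 5, x ^ m / (m.factorial : ℝ)
      = 1 + x + x ^ 2 / 2 + x ^ 3 / 6 + x ^ 4 / 24 := by
    simp [Finset.sum_range_succ, Nat.factorial]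
  rw [hsum] at h
  have h2 : Real.exp x - (1 + x + x ^ 2 / 2 + x ^ 3 / 6 + x ^ 4 / 24)
      ≤ |x| ^ 5 * (6 / ((Nat.factorial 5 : ℝ) * 5)) := (abs_le.mp h).2
  have hb : (6 : ℝ) / ((Nat.factorial 5 : ℝ) * 5) = 1 / 100 := by
    norm_num [Nat.factorial]
  rw [hb] at h2
  have habs2 : |x| ^ 2 = x ^ 2 := sq_abs x
  have h5 : |x| ^ 5 ≤ x ^ 2 := by
    calc |x| ^ 5 ≤ |x| ^ 2 := pow_le_pow_of_le_one (abs_nonneg x) hx (by norm_num)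
    _ = x ^ 2 := habs2
  have h3 : x ^ 3 ≤ x ^ 2 := by
    calc x ^ 3 ≤ |x ^ 3| := le_abs_self _
    _ = |x| ^ 3 := (abs_pow x 3)
    _ ≤ |x| ^ 2 := pow_le_pow_of_le_one (abs_nonneg x) hx (by norm_num)
    _ = x ^ 2 := habs2
  have h4 : x ^ 4 ≤ x ^ 2 := by
    calc x ^ 4 ≤ |x ^ 4| := le_abs_self _
    _ = |x| ^ 4 := (abs_pow x 4)
    _ ≤ |x| ^ 2 := pow_le_pow_of_le_one (abs_nonneg x) hx (by norm_num)
    _ = x ^ 2 := habs2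
  have hsq : (0:ℝ) ≤ x ^ 2 := sq_nonneg x
  linarith

/-- MGF bound for a bounded centered random variable (Lemma 2). -/
theorem mgf_bound_of_bounded_centered
    {Ω : Type*} [MeasureSpace Ω]
    (μ : Measure Ω) [IsProbabilityMeasure μ]
    (X : Ω → ℝ) (hX : Integrable X μ)
    (hmean : ∫ ω, X ω ∂μ = 0)
    (M : ℝ) (hM : 0 < M) (hbdd : ∀ᵐ ω ∂μ, |X ω| ≤ M)
    (lam : ℝ) (hlam0 : 0 ≤ lam) (hlamM : lam ≤ 1 / M) :
    ∫ ω, Real.exp (lam * X ω) ∂μ ≤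
      Real.exp ((3 / 4) * lam ^ 2 * ∫ ω, (X ω) ^ 2 ∂μ) := by
  -- a.e. bound |lam * X| ≤ 1
  have hae1 : ∀ᵐ ω ∂μ, |lam * X ω| ≤ 1 := by
    filter_upwards [hbdd] with ω hω
    have : |lam * X ω| = lam * |X ω| := by
      rw [abs_mul, abs_of_nonneg hlam0]
    rw [this]
    calc lam * |X ω| ≤ (1 / M) * M := by
          apply mul_le_mul hlamM hω (abs_nonneg _) (by positivity)
    _ = 1 := by field_simp
  -- integrability of X^2
  have hXm := hX.aestronglyMeasurable
  have hX2 : Integrable (fun ω => (X ω) ^ 2) μ := by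
    refine Integrable.mono' (integrable_const (M ^ 2)) (hXm.pow 2) ?_
    filter_upwards [hbdd] with ω hω
    rw [Real.norm_eq_abs, abs_pow]
    exact pow_le_pow_left₀ (abs_nonneg _) hω 2
  -- integrability of exp (lam * X)
  have hexp : Integrable (fun ω => Real.exp (lam * X ω)) μ := by
    refine Integrable.mono' (integrable_const (Real.exp 1))
      (Real.continuous_exp.comp_aestronglyMeasurable (hXm.const_mul lam)) ?_
    filter_upwards [hae1] with ω hω
    rw [Real.norm_eq_abs, abs_of_pos (Real.exp_pos _)]
    exact Real.exp_le_exp.mpr (le_trans (le_abs_self _) hω)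
  -- integrability of the quadratic bound
  have hquad : Integrable (fun ω => 1 + lam * X ω + (3 / 4) * (lam * X ω) ^ 2) μ := by
    have h1 : Integrable (fun ω => lam * X ω) μ := hX.const_mul lam
    have h2 : Integrable (fun ω => (3 / 4) * (lam * X ω) ^ 2) μ := by
      have : (fun ω => (3 / 4) * (lam * X ω) ^ 2)
          = fun ω => ((3 / 4) * lam ^ 2) * (X ω) ^ 2 := by
        funext ω; ring
      rw [this]
      exact hX2.const_mul _
    exact (integrable_const 1 |>.add h1).add h2
  -- pointwise comparison, then integrate
  have hle : ∫ ω, Real.exp (lam * X ω) ∂μ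
      ≤ ∫ ω, (1 + lam * X ω + (3 / 4) * (lam * X ω) ^ 2) ∂μ := by
    refine integral_mono_ae hexp hquad ?_
    filter_upwards [hae1] with ω hω
    exact exp_le_one_add_add hω
  have hcalc : ∫ ω, (1 + lam * X ω + (3 / 4) * (lam * X ω) ^ 2) ∂μ
      = 1 + (3 / 4) * lam ^ 2 * ∫ ω, (X ω) ^ 2 ∂μ := by
    have hrw : (fun ω => 1 + lam * X ω + (3 / 4) * (lam * X ω) ^ 2)
        = fun ω => 1 + lam * X ω + ((3 / 4) * lam ^ 2) * (X ω) ^ 2 := by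
      funext ω; ring
    have hf : Integrable (fun ω => 1 + lam * X ω) μ := (integrable_const 1).add (hX.const_mul lam)
    have hg : Integrable (fun ω => ((3 / 4) * lam ^ 2) * (X ω) ^ 2) μ := hX2.const_mul _
    rw [hrw, integral_add hf hg,
      integral_add (integrable_const 1) (hX.const_mul lam),
      integral_const_mul, integral_const_mul, integral_const, hmean]
    simp
  rw [hcalc] at hle
  calc ∫ ω, Real.exp (lam * X ω) ∂μ
      ≤ 1 + (3 / 4) * lam ^ 2 * ∫ ω, (X ω) ^ 2 ∂μ := hle
  _ ≤ Real.exp ((3 / 4) * lam ^ 2 * ∫ ω, (X ω) ^ 2 ∂μ) := by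
      have := Real.add_one_le_exp ((3 / 4) * lam ^ 2 * ∫ ω, (X ω) ^ 2 ∂μ)
      linarith
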